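/- arXiv:2401.13784 — 4 statements merged into one kernel-verified Lean document; each statement's English description precedes it below -/
import Mathlib

section
/- Let x(k) = Σ_{m=0}^{r-1} a_m λ_m^k with distinct nonzero λ_m and with the vectors a_0,...,a_{r-1} ∈ ℂ^n linearly independent. For l ≥ r and s ≥ l, the nl × s block Hankel matrix H with (i, p)-block x(k+i+p) (i = 0,...,l−1; p = 0,...,s−1) has rank exactly r. -/
/-!
Writing `x (k + i + p) = ∑ₘ (Λₘ ^ (k + i) • aₘ) Λₘ ^ p` factors the Hankel matrix as `H = A * V`,
where the columns of `A` are the delay-embedded mode vectors and `V` is the `r × s` Vandermonde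
matrix of the `Λₘ`. The first block row of `A` consists of the `aₘ` rescaled by the units
`Λₘ ^ k`, so `A` has independent columns and `rank H = rank V`; and `V` has full row rank `r`
because its leading `r × r` block is an invertible square Vandermonde matrix.
-/

open Matrix

namespace Matrix

variable {K : Type*} [Field K]

theorem rank_mul_eq_right_of_linearIndependent_col {m n o : Type*} [Fintype n] [Fintype o]
    {A : Matrix m n K} (hA : LinearIndependent K A.col) (B : Matrix n o K) :
    (A * B).rank = B.rank := by
  rw [← mulVec_injective_iff, ← coe_mulVecLin] at hA
  rw [rank, mulVecLin_mul, LinearMap.range_comp, rank]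
  exact (Submodule.equivMapOfInjective _ hA _).finrank_eq.symm

theorem rank_rectVandermonde_one {r s : ℕ} (hrs : r ≤ s) {v : Fin r → K}
    (hv : Function.Injective v) : (rectVandermonde v 1 s).rank = r := by
  have hrows : LinearIndependent K (rectVandermonde v 1 s).row := by
    refine Fintype.linearIndependent_iff.mpr fun c hc ↦ congrFun ?_
    refine eq_zero_of_forall_pow_sum_mul_pow_eq_zero hv fun p ↦ ?_
    have := congrFun hc ⟨p, p.2.trans_le hrs⟩
    simpa [rectVandermonde_apply] using this
  rw [hrows.rank_matrix, Fintype.card_fin]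

def delayModes {ι n : Type*} (Λ : ι → K) (a : ι → n → K) (k : ℤ) (l : ℕ) :
    Matrix (Fin l × n) ι K :=
  of fun q m ↦ Λ m ^ (k + (q.1 : ℕ)) * a m q.2

theorem linearIndependent_col_delayModes {ι n : Type*} {l : ℕ} (hl : 0 < l) {Λ : ι → K}
    (hΛ : ∀ m, Λ m ≠ 0) {a : ι → n → K} (ha : LinearIndependent K a) (k : ℤ) :
    LinearIndependent K (delayModes Λ a k l).col := by
  let firstBlock : (Fin l × n → K) →ₗ[K] n → K := LinearMap.funLeft K K fun j ↦ (⟨0, hl⟩, j)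
  refine LinearIndependent.of_comp firstBlock ?_
  convert ha.units_smul fun m ↦ Units.mk0 (Λ m ^ k) (zpow_ne_zero k (hΛ m)) using 1
  ext m j
  change Λ m ^ (k + ((0 : ℕ) : ℤ)) * a m j = Λ m ^ k * a m j
  rw [Nat.cast_zero, add_zero]

end Matrix

/-- The block Hankel matrix of a signal with `r` exponential modes with linearly
independent mode vectors has rank exactly `r` when `l ≥ r` and `s ≥ l`. -/
theorem stmt7 (n r l s : ℕ) (hl : r ≤ l) (hs : l ≤ s) (k : ℤ)
    (Λ : Fin r → ℂ) (hΛ : ∀ m, Λ m ≠ 0) (hd : Function.Injective Λ)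
    (a : Fin r → Fin n → ℂ) (hli : LinearIndependent ℂ a)
    (x : ℤ → Fin n → ℂ)
    (hx : ∀ (k' : ℤ) (i : Fin n), x k' i = ∑ m, a m i * Λ m ^ k')
    (H : Matrix (Fin l × Fin n) (Fin s) ℂ)
    (hH : ∀ (i : Fin l) (j : Fin n) (p : Fin s),
      H (i, j) p = x (k + (i : ℕ) + (p : ℕ)) j) :
    H.rank = r := by
  have hfactor : H = delayModes Λ a k l * rectVandermonde Λ 1 s := by
    ext ⟨i, j⟩ p
    rw [hH, hx, mul_apply]
    refine Finset.sum_congr rfl fun m _ ↦ ?_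
    rw [zpow_add₀ (hΛ m), zpow_natCast, delayModes, of_apply, rectVandermonde_apply, Pi.one_apply,
      one_pow, mul_one]
    ring
  have hcols : LinearIndependent ℂ (delayModes Λ a k l).col := by
    rcases Nat.eq_zero_or_pos r with rfl | hr
    · exact linearIndependent_empty_type
    · exact linearIndependent_col_delayModes (hr.trans_le hl) hΛ hli k
  rw [hfactor, rank_mul_eq_right_of_linearIndependent_col hcols,
    rank_rectVandermonde_one (hl.trans hs) hd]
end

section
/- If x : ℤ → ℂ satisfies x(k) = Σ_{m=0}^{r-1} a_m λ_m^k for distinct nonzero λ_m with all a_m ≠ 0, then x cannot satisfy any linear AR relation of order strictly less than r; that is, there do not exist β_0,...,β_{q-1} with q < r such that x(k+q) = Σ_{p=0}^{q-1} β_p x(k+p) for all k. -/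
open Polynomial

/-- A scalar signal that is a sum of `r` distinct exponential modes with nonzero
coefficients satisfies no AR relation of order strictly less than `r`. -/
theorem stmt10 (r : ℕ) (Λ : Fin r → ℂ) (hΛ : ∀ m, Λ m ≠ 0)
    (hd : Function.Injective Λ) (a : Fin r → ℂ) (ha : ∀ m, a m ≠ 0)
    (x : ℤ → ℂ) (hx : ∀ k : ℤ, x k = ∑ m, a m * Λ m ^ k) :
    ∀ q : ℕ, q < r → ∀ β : Fin q → ℂ,
      ¬ (∀ k : ℤ, x (k + q) = ∑ p : Fin q, β p * x (k + (p : ℕ))) := by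
  intro q hq β hrel
  set P : ℂ[X] := X ^ q - ∑ p : Fin q, C (β p) * X ^ (p : ℕ) with hP
  -- key: for all integers k, ∑ m, (a m * P.eval (Λ m)) * Λ m ^ k = 0
  have key : ∀ k : ℤ, ∑ m, (a m * P.eval (Λ m)) * Λ m ^ k = 0 := by
    intro k
    have h := hrel k
    simp only [hx] at h
    have h2 : ∀ p : Fin q, x (k + (p : ℕ)) = ∑ m, a m * Λ m ^ k * Λ m ^ (p : ℕ) := by
      intro p
      rw [hx]
      refine Finset.sum_congr rfl fun m _ => ?_
      rw [zpow_add₀ (hΛ m), zpow_natCast, mul_assoc]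
    have h3 : (∑ m, a m * Λ m ^ (k + (q:ℤ))) = ∑ m, a m * Λ m ^ k * Λ m ^ q := by
      refine Finset.sum_congr rfl fun m _ => ?_
      rw [zpow_add₀ (hΛ m), zpow_natCast, mul_assoc]
    simp only [← hx] at h
    rw [hx (k + q), h3] at h
    simp only [h2] at h
    have : ∑ m, a m * Λ m ^ k * Λ m ^ q
        = ∑ m, a m * Λ m ^ k * (∑ p : Fin q, β p * Λ m ^ (p : ℕ)) := by
      rw [h]
      simp only [Finset.mul_sum]
      rw [Finset.sum_comm]
      exact Finset.sum_congr rfl fun m _ => Finset.sum_congr rfl fun p _ => by ring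
    have := sub_eq_zero.mpr this
    rw [← Finset.sum_sub_distrib] at this
    rw [← this]
    refine Finset.sum_congr rfl fun m _ => ?_
    simp only [hP, eval_sub, eval_pow, eval_X, eval_finset_sum, eval_mul, eval_C]
    ring
  -- Vandermonde argument: coefficients vanish
  have hc : ∀ m, a m * P.eval (Λ m) = 0 := by
    set c : Fin r → ℂ := fun m => a m * P.eval (Λ m) with hcdef
    have hmv : (Matrix.vandermonde Λ).transpose.mulVec c = 0 := by
      funext j
      have := key (j : ℕ)
      simp only [zpow_natCast] at this
      simpa [Matrix.mulVec, dotProduct, Matrix.vandermonde, mul_comm] using this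
    have hdet : ((Matrix.vandermonde Λ).transpose).det ≠ 0 := by
      rw [Matrix.det_transpose, Matrix.det_vandermonde_ne_zero_iff]
      exact hd
    have := Matrix.eq_zero_of_mulVec_eq_zero hdet hmv
    intro m
    exact congrFun this m
  have hroot : ∀ m, P.eval (Λ m) = 0 := fun m => by
    rcases mul_eq_zero.mp (hc m) with h | h
    · exact absurd h (ha m)
    · exact h
  -- P ≠ 0 since its coefficient at q is 1
  have hPne : P ≠ 0 := by
    intro h0
    have : P.coeff q = 1 := by
      simp only [hP, coeff_sub, coeff_X_pow, if_pos rfl, Polynomial.finset_sum_coeff,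
        coeff_C_mul, coeff_X_pow]
      have h1 : ∀ p ∈ Finset.univ, β p * (if q = (p : ℕ) then (1:ℂ) else 0) = 0 := by
        intro p _
        rw [if_neg (Nat.ne_of_gt p.2), mul_zero]
      rw [Finset.sum_congr rfl h1]
      simp
    rw [h0] at this
    simp at this
  have hdeg : P.natDegree ≤ q := by
    apply le_trans (Polynomial.natDegree_sub_le _ _)
    simp only [max_le_iff, Polynomial.natDegree_X_pow, le_refl, true_and]
    apply le_trans (Polynomial.natDegree_sum_le _ _)
    apply Finset.sup_le
    intro p _
    apply le_trans (Polynomial.natDegree_C_mul_le _ _)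
    simp only [Polynomial.natDegree_X_pow]
    exact le_of_lt p.2
  -- r distinct roots but degree ≤ q < r : contradiction
  have hsub : Finset.univ.image Λ ⊆ P.roots.toFinset := by
    intro z hz
    rcases Finset.mem_image.mp hz with ⟨m, _, rfl⟩
    rw [Multiset.mem_toFinset, Polynomial.mem_roots hPne]
    exact hroot m
  have h1 : r ≤ P.roots.toFinset.card := by
    calc r = (Finset.univ.image Λ).card := by
              rw [Finset.card_image_of_injective _ hd, Finset.card_univ, Fintype.card_fin]
    _ ≤ P.roots.toFinset.card := Finset.card_le_card hsub
  have h2 : P.roots.toFinset.card ≤ P.natDegree :=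
    le_trans (Multiset.toFinset_card_le _) (Polynomial.card_roots' P)
  omega
end

section
/- Let x : ℤ → ℂ^n be periodic with period N and suppose its Fourier series has exactly 2M nonzero coefficients. Then x satisfies a linear AR model of order 2M, and 2M is the minimal such order when the corresponding Fourier coefficient vectors are nonzero and n = 1. -/
open Polynomial

/-- A periodic signal whose Fourier series has exactly `2M` nonzero terms with
distinct frequencies satisfies an AR model of order `2M`, and `2M` is minimal
when `n = 1` and all Fourier coefficients are nonzero. -/
theorem stmt12 (n N M : ℕ) (hN : 0 < N) (x : ℤ → Fin n → ℂ)
    (hper : ∀ k : ℤ, x (k + N) = x k)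
    (a : Fin (2 * M) → Fin n → ℂ) (ω : Fin (2 * M) → ℝ)
    (hω : ∀ m, ω m ∈ Set.Ico (0 : ℝ) (2 * Real.pi)) (hd : Function.Injective ω)
    (hrep : ∀ (k : ℤ) (i : Fin n),
      x k i = ∑ m, a m i * Complex.exp (Complex.I * ((ω m : ℂ)) * (k : ℂ))) :
    (∃ α : Fin (2 * M) → ℂ, ∀ (k : ℤ) (i : Fin n),
      x (k + (2 * M : ℕ)) i = ∑ p : Fin (2 * M), α p * x (k + (p : ℕ)) i) ∧
    (n = 1 → (∀ m, a m ≠ 0) → ∀ q : ℕ, q < 2 * M → ∀ β : Fin q → ℂ,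
      ¬ (∀ (k : ℤ) (i : Fin n), x (k + q) i = ∑ p : Fin q, β p * x (k + (p : ℕ)) i)) := by
  classical
  set z : Fin (2 * M) → ℂ := fun m => Complex.exp (Complex.I * (ω m : ℂ)) with hzdef
  have hz0 : ∀ m, z m ≠ 0 := fun m => Complex.exp_ne_zero _
  have hzinj : Function.Injective z := by
    intro m1 m2 h
    apply hd
    rw [hzdef] at h
    simp only at h
    rw [Complex.exp_eq_exp_iff_exists_int] at h
    obtain ⟨t, ht⟩ := h
    have him := congrArg Complex.im ht
    simp [Complex.mul_im, Complex.mul_re] at him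
    have htz : t = 0 := by
      have h1 := (hω m1).1
      have h2 := (hω m1).2
      have h3 := (hω m2).1
      have h4 := (hω m2).2
      rcases lt_trichotomy t 0 with h0 | h0 | h0
      · exfalso
        have ht1 : t ≤ -1 := by omega
        have : (t : ℝ) ≤ -1 := by exact_mod_cast ht1
        nlinarith [Real.pi_pos]
      · exact h0
      · exfalso
        have : (1 : ℝ) ≤ (t : ℝ) := by exact_mod_cast h0
        nlinarith [Real.pi_pos]
    rw [htz] at him
    simpa using him
  have hxz : ∀ (k : ℤ) (i : Fin n), x k i = ∑ m, a m i * z m ^ k := by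
    intro k i
    rw [hrep k i]
    refine Finset.sum_congr rfl fun m _ => ?_
    congr 1
    rw [hzdef]
    simp only
    rw [← Complex.exp_int_mul]
    ring_nf
  have hpow : ∀ (m : Fin (2 * M)) (s t : ℕ), z m ^ ((s : ℤ) + (t : ℕ)) = z m ^ s * z m ^ t := by
    intro m s t
    rw [zpow_add₀ (hz0 m), zpow_natCast, zpow_natCast]
  constructor
  · -- existence of AR model of order 2M
    set P : ℂ[X] := ∏ m : Fin (2 * M), (X - C (z m)) with hPdef
    have hPm : P.Monic := monic_prod_of_monic _ _ fun m _ => monic_X_sub_C _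
    have hPd : P.natDegree = 2 * M := by
      rw [hPdef, natDegree_prod_of_monic _ _ fun m _ => monic_X_sub_C _]
      simp
    refine ⟨fun p => -P.coeff p, ?_⟩
    have hkey : ∀ m, z m ^ (2 * M) =
        ∑ p : Fin (2 * M), -P.coeff (p : ℕ) * z m ^ (p : ℕ) := by
      intro m
      have hroot : P.eval (z m) = 0 := by
        rw [hPdef, eval_prod]
        exact Finset.prod_eq_zero (Finset.mem_univ m) (by simp)
      have heval := eval_eq_sum_range' (n := 2 * M + 1) (by omega : P.natDegree < 2 * M + 1) (z m)
      rw [hroot, Finset.sum_range_succ] at heval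
      have hlead : P.coeff (2 * M) = 1 := by
        have := hPm.coeff_natDegree
        rwa [hPd] at this
      rw [hlead, one_mul] at heval
      have : z m ^ (2 * M) = -∑ i ∈ Finset.range (2 * M), P.coeff i * z m ^ i := by
        linear_combination -heval
      rw [this, ← Finset.sum_neg_distrib, Fin.sum_univ_eq_sum_range
        (fun i => -P.coeff i * z m ^ i)]
      exact Finset.sum_congr rfl fun i _ => by ring
    intro k i
    rw [hxz]
    have expand : ∀ m : Fin (2 * M), a m i * z m ^ (k + ((2 * M : ℕ) : ℤ)) =
        ∑ p : Fin (2 * M), -P.coeff (p : ℕ) * (a m i * z m ^ (k + ((p : ℕ) : ℤ))) := by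
      intro m
      rw [zpow_add₀ (hz0 m), zpow_natCast, hkey m, Finset.mul_sum, Finset.mul_sum]
      refine Finset.sum_congr rfl fun p _ => ?_
      rw [zpow_add₀ (hz0 m), zpow_natCast]
      ring
    simp_rw [expand]
    rw [Finset.sum_comm]
    refine Finset.sum_congr rfl fun p _ => ?_
    rw [hxz, Finset.mul_sum]
  · -- minimality
    intro hn ha q hq β h
    subst hn
    have ha0 : ∀ m, a m 0 ≠ 0 := by
      intro m hm
      apply ha m
      funext i
      have : i = 0 := Subsingleton.elim _ _
      rw [this, hm]; rfl
    set Q : ℂ[X] := X ^ q - ∑ p : Fin q, C (β p) * X ^ (p : ℕ) with hQdef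
    have hQeval : ∀ m, Q.eval (z m) = z m ^ q - ∑ p : Fin q, β p * z m ^ (p : ℕ) := by
      intro m
      rw [hQdef]
      simp [eval_finset_sum]
    have hsys : ∀ j : Fin (2 * M),
        ∑ m, (a m 0 * Q.eval (z m)) * z m ^ (j : ℕ) = 0 := by
      intro j
      have h0 := h ((j : ℕ) : ℤ) 0
      rw [hxz] at h0
      simp only [hxz] at h0
      have key : ∀ m, (a m 0 * Q.eval (z m)) * z m ^ (j : ℕ) =
          a m 0 * z m ^ (((j : ℕ) : ℤ) + (q : ℕ)) -
          ∑ p : Fin q, β p * (a m 0 * z m ^ (((j : ℕ) : ℤ) + ((p : ℕ) : ℕ))) := by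
        intro m
        rw [hQeval m]
        simp_rw [hpow m (j : ℕ)]
        have hS : ∑ p : Fin q, β p * (a m 0 * (z m ^ (j : ℕ) * z m ^ (p : ℕ))) =
            a m 0 * z m ^ (j : ℕ) * ∑ p : Fin q, β p * z m ^ (p : ℕ) := by
          rw [Finset.mul_sum]
          exact Finset.sum_congr rfl fun p _ => by ring
        rw [hS]
        ring
      simp_rw [key]
      rw [Finset.sum_sub_distrib, sub_eq_zero, h0, Finset.sum_comm]
      exact Finset.sum_congr rfl fun p _ => by rw [Finset.mul_sum]
    have hc : (fun m => a m 0 * Q.eval (z m)) = 0 :=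
      Matrix.eq_zero_of_forall_pow_sum_mul_pow_eq_zero hzinj hsys
    have hQroot : ∀ m, Q.eval (z m) = 0 := by
      intro m
      have := congrFun hc m
      simp only [Pi.zero_apply] at this
      exact (mul_eq_zero.1 this).resolve_left (ha0 m)
    have hQcoeff : Q.coeff q = 1 := by
      rw [hQdef, coeff_sub, coeff_X_pow, if_pos rfl, finset_sum_coeff]
      rw [Finset.sum_eq_zero fun p _ => ?_, sub_zero]
      rw [coeff_C_mul, coeff_X_pow, if_neg p.is_lt.ne', mul_zero]
    have hQne : Q ≠ 0 := fun hz => by simp [hz] at hQcoeff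
    have hQdeg : Q.natDegree ≤ q := by
      rw [hQdef]
      refine le_trans (natDegree_sub_le _ _) (max_le (by simp) ?_)
      refine natDegree_sum_le_of_forall_le _ _ fun p _ => ?_
      refine le_trans (natDegree_C_mul_le _ _) ?_
      simpa using p.is_lt.le
    have hmem : ∀ m, z m ∈ Q.roots.toFinset := by
      intro m
      rw [Multiset.mem_toFinset, mem_roots hQne]
      exact hQroot m
    have hcard : 2 * M ≤ Q.roots.toFinset.card := by
      have hsub : Finset.univ.image z ⊆ Q.roots.toFinset :=
        Finset.image_subset_iff.2 fun m _ => hmem m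
      have := Finset.card_le_card hsub
      rwa [Finset.card_image_of_injective _ hzinj, Finset.card_univ, Fintype.card_fin] at this
    have := (Multiset.toFinset_card_le Q.roots).trans (Q.card_roots')
    omega
end

section
/- Let x(k) = Σ_{m=0}^{r-1} a_m λ_m^k (distinct nonzero λ_m, vectors a_m ∈ ℂ^n) and form snapshot matrices X = [x(0),...,x(s-1)] and X' = [x(1),...,x(s)]. If the mode matrix Φ = [a_0,...,a_{r-1}] has full column rank and the Vandermonde matrix of the λ_m with s columns has full row rank, then any matrix A satisfying X' = A·X satisfies A·a_m = λ_m·a_m for every m, i.e., each (λ_m, a_m) is an eigenpair of A. -/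
/-- Exact DMD recovery: if `X' = A X` for snapshot matrices of a signal with `r`
distinct exponential modes, linearly independent mode vectors, and a
full-row-rank Vandermonde matrix, then each `(λ_m, a_m)` is an eigenpair of `A`. -/
theorem stmt19 (n r s : ℕ) (Λ : Fin r → ℂ) (hΛ : ∀ m, Λ m ≠ 0)
    (hd : Function.Injective Λ) (a : Fin r → Fin n → ℂ)
    (hli : LinearIndependent ℂ a)
    (x : ℕ → Fin n → ℂ) (hx : ∀ (k : ℕ) (i : Fin n), x k i = ∑ m, a m i * Λ m ^ k)
    (hVrank : (Matrix.of fun (m : Fin r) (p : Fin s) => Λ m ^ (p : ℕ)).rank = r)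
    (X X' : Matrix (Fin n) (Fin s) ℂ)
    (hX : ∀ (j : Fin n) (p : Fin s), X j p = x (p : ℕ) j)
    (hX' : ∀ (j : Fin n) (p : Fin s), X' j p = x ((p : ℕ) + 1) j)
    (A : Matrix (Fin n) (Fin n) ℂ) (hA : X' = A * X) :
    ∀ m, A.mulVec (a m) = Λ m • a m := by
  classical
  set V : Matrix (Fin r) (Fin s) ℂ := Matrix.of fun m p => Λ m ^ (p : ℕ) with hVdef
  set Φ : Matrix (Fin n) (Fin r) ℂ := Matrix.of fun j m => a m j with hΦdef
  set Φ' : Matrix (Fin n) (Fin r) ℂ := Matrix.of fun j m => Λ m * a m j with hΦ'def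
  have hXeq : X = Φ * V := by
    ext j p
    simp [Matrix.mul_apply, hX, hx, hΦdef, hVdef]
  have hX'eq : X' = Φ' * V := by
    ext j p
    simp only [Matrix.mul_apply, hX', hx, hΦ'def, hVdef, Matrix.of_apply, pow_succ]
    exact Finset.sum_congr rfl fun m _ => by ring
  have hsurj : Function.Surjective V.mulVecLin := by
    rw [← LinearMap.range_eq_top]
    apply Submodule.eq_top_of_finrank_eq
    simpa [Matrix.rank] using hVrank
  choose w hw using fun m => hsurj (Pi.single m 1)
  set W : Matrix (Fin s) (Fin r) ℂ := Matrix.of fun p m => w m p with hWdef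
  have hVW : V * W = 1 := by
    ext i m
    have h := congrFun (hw m) i
    simp only [Matrix.mulVecLin_apply, Matrix.mulVec, dotProduct] at h
    simpa [Matrix.mul_apply, hWdef, Matrix.one_apply, Pi.single_apply] using h
  have key : Φ' = A * Φ := by
    have h1 : Φ' * V = A * Φ * V := by
      rw [← hX'eq, hA, hXeq, Matrix.mul_assoc]
    calc Φ' = Φ' * (V * W) := by rw [hVW, Matrix.mul_one]
      _ = A * Φ * (V * W) := by rw [← Matrix.mul_assoc, h1, Matrix.mul_assoc]
      _ = A * Φ := by rw [hVW, Matrix.mul_one]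
  intro m
  funext j
  have h := congrFun (congrFun key j) m
  simp only [Matrix.mul_apply, Matrix.of_apply, hΦ'def, hΦdef] at h
  simpa [Matrix.mulVec, dotProduct, smul_eq_mul] using h.symm
end
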